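/- arXiv:2001.10250 — 2 statements merged into one kernel-verified Lean document; each statement's English description precedes it below -/
import Mathlib

section
/- Let n ≥ 1, let J be a real orthogonal n×n matrix, let λ > 0, let F₀ be an invertible real n×n matrix with |det F₀| = λ^{n/2}, and set M = F₀ (λ J) F₀⁻¹ (so that |det M| = λⁿ). Then the set of symmetric positive definite matrices P satisfying (det P)^{−2/n} · M P Mᵀ = P equals { F₀ A Aᵀ F₀ᵀ : A invertible real n×n matrix with A J = J A and det(A Aᵀ) = 1 }. -/
/-!
Both sides are invariant under the congruence `X ↦ F₀ X F₀ᵀ`, which turns `M` into `λ J` and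
multiplies determinants by `(det F₀)² = λⁿ`; so it suffices to treat `F₀ = 1`, `λ = 1`.
There, taking determinants in `(det Q)^(-2/n) • J Q Jᵀ = Q` forces `det Q = 1`, so `Q` is a
positive definite fixed point of conjugation by the orthogonal `J`, i.e. commutes with `J`.
Then `A = √Q` commutes with `J` as well and `Q = A Aᵀ`.
-/

open Matrix

lemma Real.rpow_neg_two_div_pow {x : ℝ} (hx : 0 ≤ x) {n : ℕ} (hn : n ≠ 0) :
    (x ^ (-(2 : ℝ) / n)) ^ n = (x ^ 2)⁻¹ := by
  rw [← Real.rpow_mul_natCast hx, div_mul_cancel₀ _ (Nat.cast_ne_zero.mpr hn), Real.rpow_neg hx,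
    Real.rpow_two]

lemma Real.sq_rpow_neg_two_div {a lam : ℝ} (hlam : 0 < lam) {n : ℕ} (hn : n ≠ 0)
    (ha : |a| = lam ^ ((n : ℝ) / 2)) : (a ^ 2) ^ (-(2 : ℝ) / n) = (lam ^ 2)⁻¹ := by
  have hn' : (n : ℝ) ≠ 0 := Nat.cast_ne_zero.mpr hn
  rw [← sq_abs, ha, ← Real.rpow_two, ← Real.rpow_mul hlam.le, ← Real.rpow_mul hlam.le,
    show (n : ℝ) / 2 * 2 * (-2 / n) = -2 by field_simp, Real.rpow_neg hlam.le, Real.rpow_two]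

namespace Matrix

variable {ι : Type*} [Fintype ι] [DecidableEq ι]

lemma det_mul_mul_transpose (F Q : Matrix ι ι ℝ) : (F * Q * Fᵀ).det = F.det ^ 2 * Q.det := by
  rw [det_mul, det_mul, det_transpose]; ring

lemma mul_mul_transpose_inj {F : Matrix ι ι ℝ} (hF : IsUnit F) {X Y : Matrix ι ι ℝ} :
    F * X * Fᵀ = F * Y * Fᵀ ↔ X = Y := by
  rw [((isUnit_transpose F).mpr hF).mul_left_inj, hF.mul_right_inj]

lemma exists_eq_mul_mul_transpose {F : Matrix ι ι ℝ} (hF : IsUnit F) (P : Matrix ι ι ℝ) :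
    ∃ Q, P = F * Q * Fᵀ := by
  have hdet : IsUnit F.det := (isUnit_iff_isUnit_det F).mp hF
  refine ⟨F⁻¹ * P * F⁻¹ᵀ, ?_⟩
  rw [← Matrix.mul_assoc, ← Matrix.mul_assoc, mul_nonsing_inv _ hdet, Matrix.one_mul,
    Matrix.mul_assoc, ← transpose_mul, mul_nonsing_inv _ hdet, transpose_one, Matrix.mul_one]

lemma posDef_mul_mul_transpose_iff {F Q : Matrix ι ι ℝ} (hF : IsUnit F) :
    (F * Q * Fᵀ).PosDef ↔ Q.PosDef := by
  simpa [star_eq_conjTranspose] using hF.posDef_star_right_conjugate_iff (x := Q)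

lemma mul_mul_transpose_of_eq_conj {F J M : Matrix ι ι ℝ} (hF : IsUnit F) (c : ℝ)
    (hM : M = F * (c • J) * F⁻¹) (Q : Matrix ι ι ℝ) :
    M * (F * Q * Fᵀ) * Mᵀ = c ^ 2 • (F * (J * Q * Jᵀ) * Fᵀ) := by
  have hdet : IsUnit F.det := (isUnit_iff_isUnit_det F).mp hF
  have hdetT : IsUnit Fᵀ.det := by rwa [det_transpose]
  subst hM
  simp only [transpose_mul, transpose_smul, transpose_nonsing_inv, smul_mul, Matrix.mul_smul,
    smul_smul, Matrix.mul_assoc, nonsing_inv_mul_cancel_left F _ hdet,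
    mul_nonsing_inv_cancel_left Fᵀ _ hdetT, sq]

lemma det_rpow_smul_conj_eq_self_iff {J Q : Matrix ι ι ℝ} (hι : Fintype.card ι ≠ 0)
    (hJ : J * Jᵀ = 1) (hQ : 0 < Q.det) :
    (Q.det ^ (-(2 : ℝ) / Fintype.card ι)) • (J * Q * Jᵀ) = Q ↔ Q.det = 1 ∧ J * Q * Jᵀ = Q := by
  refine ⟨fun h ↦ ?_, fun ⟨hdet, hfix⟩ ↦ by rw [hdet, Real.one_rpow, one_smul, hfix]⟩
  have hJdet : J.det * Jᵀ.det = 1 := by rw [← det_mul, hJ, det_one]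
  have hinv : (Q.det ^ 2)⁻¹ = 1 := by
    have := congrArg det h
    rw [det_smul, det_mul, det_mul, mul_right_comm J.det, hJdet, one_mul,
      Real.rpow_neg_two_div_pow hQ.le hι] at this
    exact (mul_eq_right₀ hQ.ne').mp this
  have hdet : Q.det = 1 :=
    (pow_eq_one_iff_of_nonneg hQ.le two_ne_zero).mp (inv_eq_one.mp hinv)
  refine ⟨hdet, ?_⟩
  rwa [hdet, Real.one_rpow, one_smul] at h

lemma commute_of_mul_mul_transpose_eq {J Q : Matrix ι ι ℝ} (hJ : J * Jᵀ = 1)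
    (hQ : J * Q * Jᵀ = Q) : Commute J Q := by
  calc J * Q = J * Q * Jᵀ * J := by
        rw [Matrix.mul_assoc _ Jᵀ, mul_eq_one_comm.mp hJ, Matrix.mul_one]
    _ = Q * J := by rw [hQ]

lemma mul_mul_transpose_eq_of_commute {J A : Matrix ι ι ℝ} (hJ : J * Jᵀ = 1)
    (hAJ : A * J = J * A) : J * (A * Aᵀ) * Jᵀ = A * Aᵀ := by
  calc J * (A * Aᵀ) * Jᵀ = (J * A) * (J * A)ᵀ := by simp only [transpose_mul, Matrix.mul_assoc]
    _ = A * (J * Jᵀ) * Aᵀ := by simp only [← hAJ, transpose_mul, Matrix.mul_assoc]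
    _ = A * Aᵀ := by rw [hJ, Matrix.mul_one]

open scoped MatrixOrder in
lemma PosSemidef.exists_mul_transpose_eq_of_commute {Q J : Matrix ι ι ℝ} (hQ : Q.PosSemidef)
    (hJQ : Commute J Q) : ∃ A : Matrix ι ι ℝ, A * Aᵀ = Q ∧ A * J = J * A := by
  have hA : (CFC.sqrt Q).PosSemidef := nonneg_iff_posSemidef.mp (CFC.sqrt_nonneg Q)
  refine ⟨CFC.sqrt Q, ?_, (hJQ.symm.cfcₙ_nnreal _).eq⟩
  rw [← conjTranspose_eq_transpose_of_trivial, hA.isHermitian.eq,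
    CFC.sqrt_mul_sqrt_self Q (nonneg_iff_posSemidef.mpr hQ)]

lemma posDef_det_eq_one_conj_eq_iff {J Q : Matrix ι ι ℝ} (hJ : J * Jᵀ = 1) :
    (Q.PosDef ∧ Q.det = 1 ∧ J * Q * Jᵀ = Q) ↔
      ∃ A : Matrix ι ι ℝ, IsUnit A ∧ A * J = J * A ∧ (A * Aᵀ).det = 1 ∧ Q = A * Aᵀ := by
  constructor
  · rintro ⟨hQ, hdet, hfix⟩
    obtain ⟨A, rfl, hAJ⟩ :=
      hQ.posSemidef.exists_mul_transpose_eq_of_commute (commute_of_mul_mul_transpose_eq hJ hfix)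
    have hA : IsUnit A := by
      rw [det_mul] at hdet
      exact (isUnit_iff_isUnit_det A).mpr (IsUnit.of_mul_eq_one _ hdet)
    exact ⟨A, hA, hAJ, hdet, rfl⟩
  · rintro ⟨A, hA, hAJ, hdet, rfl⟩
    refine ⟨?_, hdet, mul_mul_transpose_eq_of_commute hJ hAJ⟩
    simpa using (posDef_mul_mul_transpose_iff hA).mpr PosDef.one

end Matrix

theorem stmt_7 (n : ℕ) (hn : 1 ≤ n) (J F₀ : Matrix (Fin n) (Fin n) ℝ)
    (lam : ℝ) (hlam : 0 < lam) (hJ : J * Jᵀ = 1) (hF₀ : IsUnit F₀)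
    (hdet : |F₀.det| = lam ^ ((n : ℝ) / 2))
    (M : Matrix (Fin n) (Fin n) ℝ) (hMdef : M = F₀ * (lam • J) * F₀⁻¹) :
    {P : Matrix (Fin n) (Fin n) ℝ |
        P.PosDef ∧ (P.det ^ (-(2 : ℝ) / n)) • (M * P * Mᵀ) = P} =
      {X : Matrix (Fin n) (Fin n) ℝ | ∃ A : Matrix (Fin n) (Fin n) ℝ, IsUnit A ∧
        A * J = J * A ∧ (A * Aᵀ).det = 1 ∧ X = F₀ * A * Aᵀ * F₀ᵀ} := by
  have hn₀ : n ≠ 0 := by omega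
  have hfix (Q : Matrix (Fin n) (Fin n) ℝ) (hQ : Q.PosDef) :
      (F₀ * Q * F₀ᵀ).det ^ (-(2 : ℝ) / n) • (M * (F₀ * Q * F₀ᵀ) * Mᵀ) = F₀ * Q * F₀ᵀ ↔
        Q.det = 1 ∧ J * Q * Jᵀ = Q := by
    rw [det_mul_mul_transpose, Real.mul_rpow (sq_nonneg _) hQ.det_pos.le,
      Real.sq_rpow_neg_two_div hlam hn₀ hdet, mul_mul_transpose_of_eq_conj hF₀ lam hMdef,
      smul_smul, mul_right_comm, inv_mul_cancel₀ (by positivity), one_mul, ← Matrix.smul_mul,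
      ← Matrix.mul_smul, mul_mul_transpose_inj hF₀]
    simpa using det_rpow_smul_conj_eq_self_iff (by simpa) hJ hQ.det_pos
  ext P
  obtain ⟨Q, rfl⟩ := exists_eq_mul_mul_transpose hF₀ P
  calc _ ↔ Q.PosDef ∧ Q.det = 1 ∧ J * Q * Jᵀ = Q := by
        rw [Set.mem_ofPred_eq, posDef_mul_mul_transpose_iff hF₀]
        exact and_congr_right (hfix Q)
    _ ↔ _ := posDef_det_eq_one_conj_eq_iff hJ
    _ ↔ _ := exists_congr fun A ↦ by rw [Matrix.mul_assoc F₀ A, mul_mul_transpose_inj hF₀]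
end

section
/- Let n ≥ 1, let W be a real orthogonal n×n matrix, let R be an invertible real n×n matrix, and set M = R W Rᵀ. Then the set of symmetric positive definite matrices P satisfying M P⁻¹ Mᵀ = P equals { R G Gᵀ Rᵀ : G invertible real n×n matrix with G W² = W² G and (G Gᵀ) W (G Gᵀ)ᵀ = W }. -/
open Matrix
open scoped MatrixOrder

/-!
Congruence by `R` turns the equation `M P⁻¹ Mᵀ = P` for `P = R S Rᵀ` into `W S⁻¹ Wᵀ = S`,
i.e. `S W S = W` since `W` is orthogonal. Such an `S` commutes with `W²`
(`S W² = W S⁻¹ W = W² S`), hence so does its positive square root `G = √S`, which gives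
`S = G Gᵀ`. Conversely `G Gᵀ` is positive definite for every invertible `G`.
-/

theorem commute_mul_self_of_mul_mul_eq {α : Type*} [Monoid α] {s w : α} (hs : IsUnit s)
    (h : s * w * s = w) : Commute s (w * w) := by
  obtain ⟨u, rfl⟩ := hs
  have hl : ↑u * w = w * ↑u⁻¹ := u.eq_mul_inv_iff_mul_eq.mpr h
  have hr : w * ↑u = ↑u⁻¹ * w := u.eq_inv_mul_iff_mul_eq.mpr (by rwa [← mul_assoc])
  calc ↑u * (w * w) = w * ↑u⁻¹ * w := by rw [← mul_assoc, hl]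
    _ = w * w * ↑u := by rw [mul_assoc, mul_assoc, hr]

namespace Matrix

variable {ι K : Type*} [Fintype ι] [DecidableEq ι] [CommRing K]

/-- The paper's `Γ_M ∘ j`. -/
noncomputable def congrInv (M X : Matrix ι ι K) : Matrix ι ι K := M * X⁻¹ * Mᵀ

theorem congrInv_eq_self_iff {W S : Matrix ι ι K} (hW : W * Wᵀ = 1) (hS : IsUnit S) :
    congrInv W S = S ↔ S * W * S = W := by
  have hWt : Wᵀ * W = 1 := mul_eq_one_comm.mp hW
  have hSd : IsUnit S.det := (isUnit_iff_isUnit_det S).mp hS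
  unfold congrInv
  constructor
  · intro h
    nth_rewrite 1 [← h]
    rw [mul_assoc _ Wᵀ, hWt, mul_one, mul_assoc, nonsing_inv_mul S hSd, mul_one]
  · intro h
    nth_rewrite 1 [← h]
    rw [mul_assoc (S * W) S, mul_nonsing_inv S hSd, mul_one, mul_assoc, hW, mul_one]

theorem congrInv_mul_mul_transpose {R W S : Matrix ι ι K} (hR : IsUnit R) :
    congrInv (R * W * Rᵀ) (R * S * Rᵀ) = R * congrInv W S * Rᵀ := by
  have hRd : IsUnit R.det := (isUnit_iff_isUnit_det R).mp hR
  have hRtd : IsUnit Rᵀ.det := by rwa [det_transpose]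
  simp only [congrInv, mul_inv_rev, transpose_mul, transpose_transpose, mul_assoc,
    mul_nonsing_inv_cancel_left Rᵀ _ hRtd, nonsing_inv_mul_cancel_left R _ hRd]

theorem congrInv_mul_mul_transpose_eq_self_iff {R W S : Matrix ι ι K} (hR : IsUnit R)
    (hW : W * Wᵀ = 1) (hS : IsUnit S) :
    congrInv (R * W * Rᵀ) (R * S * Rᵀ) = R * S * Rᵀ ↔ S * W * S = W := by
  rw [congrInv_mul_mul_transpose hR, (isUnit_transpose R |>.mpr hR).mul_left_inj,
    hR.mul_right_inj, congrInv_eq_self_iff hW hS]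

theorem posDef_mul_mul_transpose_iff_s15 {R S : Matrix ι ι ℝ} (hR : IsUnit R) :
    (R * S * Rᵀ).PosDef ↔ S.PosDef := by
  simpa only [star_eq_conjTranspose, conjTranspose_eq_transpose_of_trivial] using
    IsUnit.posDef_star_right_conjugate_iff (x := S) hR

theorem PosDef.exists_eq_mul_mul_transpose {R P : Matrix ι ι ℝ} (hR : IsUnit R)
    (hP : P.PosDef) : ∃ S : Matrix ι ι ℝ, S.PosDef ∧ P = R * S * Rᵀ := by
  have hRd : IsUnit R.det := (isUnit_iff_isUnit_det R).mp hR
  have hP' : P = R * (R⁻¹ * P * R⁻¹ᵀ) * Rᵀ := by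
    simp only [mul_assoc, ← transpose_mul, mul_nonsing_inv R hRd, transpose_one, mul_one,
      mul_nonsing_inv_cancel_left R P hRd]
  refine ⟨_, ?_, hP'⟩
  rwa [← posDef_mul_mul_transpose_iff_s15 hR, ← hP']

theorem PosDef.exists_mul_transpose_eq_of_commute {S B : Matrix ι ι ℝ} (hS : S.PosDef)
    (hSB : Commute S B) : ∃ G : Matrix ι ι ℝ, IsUnit G ∧ Commute G B ∧ G * Gᵀ = S := by
  have hG : (CFC.sqrt S).PosSemidef := nonneg_iff_posSemidef.mp (CFC.sqrt_nonneg S)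
  refine ⟨CFC.sqrt S, (CFC.isUnit_sqrt_iff S).mpr hS.isUnit, ?_, ?_⟩
  · rw [CFC.sqrt_eq_cfc]
    exact hSB.cfc_nnreal _
  · rw [← conjTranspose_eq_transpose_of_trivial, hG.isHermitian.eq, CFC.sqrt_mul_sqrt_self S]

end Matrix

theorem stmt_15_general (n : ℕ) (W R : Matrix (Fin n) (Fin n) ℝ)
    (hW : W * Wᵀ = 1) (hR : IsUnit R) (M : Matrix (Fin n) (Fin n) ℝ)
    (hMdef : M = R * W * Rᵀ) :
    {P : Matrix (Fin n) (Fin n) ℝ | P.PosDef ∧ M * P⁻¹ * Mᵀ = P} =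
      {X : Matrix (Fin n) (Fin n) ℝ | ∃ G : Matrix (Fin n) (Fin n) ℝ, IsUnit G ∧
        G * (W * W) = (W * W) * G ∧ (G * Gᵀ) * W * (G * Gᵀ)ᵀ = W ∧
        X = R * (G * Gᵀ) * Rᵀ} := by
  subst hMdef
  ext P
  change P.PosDef ∧ congrInv _ P = P ↔ _
  constructor
  · rintro ⟨hP, hfix⟩
    obtain ⟨S, hS, rfl⟩ := hP.exists_eq_mul_mul_transpose hR
    have hSWS : S * W * S = W :=
      (congrInv_mul_mul_transpose_eq_self_iff hR hW hS.isUnit).mp hfix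
    obtain ⟨G, hG, hGW, rfl⟩ :=
      hS.exists_mul_transpose_eq_of_commute (commute_mul_self_of_mul_mul_eq hS.isUnit hSWS)
    refine ⟨G, hG, hGW.eq, ?_, rfl⟩
    rwa [transpose_mul, transpose_transpose]
  · rintro ⟨G, hG, -, hGW, rfl⟩
    have hS : (G * Gᵀ).PosDef := by
      simpa using (posDef_mul_mul_transpose_iff_s15 hG).mpr PosDef.one
    rw [transpose_mul, transpose_transpose] at hGW
    exact ⟨(posDef_mul_mul_transpose_iff_s15 hR).mpr hS,
      (congrInv_mul_mul_transpose_eq_self_iff hR hW hS.isUnit).mpr hGW⟩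

theorem stmt_15 (n : ℕ) (hn : 1 ≤ n) (W R : Matrix (Fin n) (Fin n) ℝ)
    (hW : W * Wᵀ = 1) (hR : IsUnit R) (M : Matrix (Fin n) (Fin n) ℝ)
    (hMdef : M = R * W * Rᵀ) :
    {P : Matrix (Fin n) (Fin n) ℝ | P.PosDef ∧ M * P⁻¹ * Mᵀ = P} =
      {X : Matrix (Fin n) (Fin n) ℝ | ∃ G : Matrix (Fin n) (Fin n) ℝ, IsUnit G ∧
        G * (W * W) = (W * W) * G ∧ (G * Gᵀ) * W * (G * Gᵀ)ᵀ = W ∧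
        X = R * (G * Gᵀ) * Rᵀ} :=
  stmt_15_general n W R hW hR M hMdef
end
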